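/- Let G be a countable directed graph and Φ_0 : 𝔏_G → ℓ^∞(V) the canonical expectation reading off the diagonal Fourier coefficients (Φ_0(T)_v = ⟨T ξ_v, ξ_v⟩), which is a unital homomorphism. If Q ∈ 𝔏_G is an idempotent with Φ_0(Q) = 0, then Q = 0. Consequently every nonzero idempotent P ∈ 𝔏_G is finite: if Q is an idempotent with PQ = QP = Q which is algebraically equivalent to P (there exist A, B ∈ 𝔏_G with AB = P, BA = Q), then Q = P. -/

import Mathlib

structure DirectedGraph where
  V : Type
  E : Type
  src : E → V
  rng : E → V

namespace DirectedGraph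

/-- Two edges are composable (as in `e₂ e₁`, `e₂` after `e₁`) when `s(e₂) = r(e₁)`. -/
def Composable (G : DirectedGraph) (a b : G.E) : Prop := G.src a = G.rng b

/-- A list `[eₙ, …, e₁]` of edges is a path when consecutive edges are composable. -/
def IsPathList (G : DirectedGraph) (μ : List G.E) : Prop := List.Chain' G.Composable μ

/-- The path `μ` has source `v` (vacuous for the empty path). -/
def SrcIs (G : DirectedGraph) (μ : List G.E) (v : G.V) : Prop :=
  ∀ e ∈ μ.getLast?, G.src e = v

/-- The path `μ`, regarded as a path with source `v`, has range `w`. -/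
def RngIs (G : DirectedGraph) (v : G.V) (μ : List G.E) (w : G.V) : Prop :=
  match μ with
  | [] => v = w
  | e :: _ => G.rng e = w

/-- `μ` is a path with source `v`. -/
def IsPathAt (G : DirectedGraph) (v : G.V) (μ : List G.E) : Prop :=
  G.IsPathList μ ∧ G.SrcIs μ v

/-- `μ` is a cycle at `v` : a path with source and range `v`. -/
def IsCycleAt (G : DirectedGraph) (v : G.V) (μ : List G.E) : Prop :=
  G.IsPathAt v μ ∧ G.RngIs v μ v

end DirectedGraph

/-- The closure of a set of operators in the weak operator topology, described
via the basic WOT neighbourhoods. -/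
def wotClosure {H : Type} [NormedAddCommGroup H] [InnerProductSpace ℂ H]
    (A : Set (H →L[ℂ] H)) : Set (H →L[ℂ] H) :=
  {T | ∀ (F : Finset (H × H)) (ε : ℝ), 0 < ε →
    ∃ X ∈ A, ∀ p ∈ F, ‖(@inner ℂ H _ ((T - X) p.1) p.2)‖ < ε}

/-- Source-annotated finite paths of `G`, the index set of the standard
orthonormal basis of the Fock space `H_G = ℓ²(F⁺_G)`. -/
def PathIdx (G : DirectedGraph) : Type := {p : G.V × List G.E // G.IsPathAt p.1 p.2}

/-- The operator of a path for a family `(Lv, Le)`: products of edge operators,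
with the empty path at `v` giving `Lv v`. -/
noncomputable def pathOpL {G : DirectedGraph} {H : Type} [NormedAddCommGroup H]
    [InnerProductSpace ℂ H] [CompleteSpace H]
    (Lv : G.V → H →L[ℂ] H) (Le : G.E → H →L[ℂ] H) (v : G.V) (μ : List G.E) :
    H →L[ℂ] H :=
  match μ with
  | [] => Lv v
  | e :: rest => ((e :: rest).map Le).prod

/-- The left regular free semigroupoid algebra `𝔏_G`: the WOT-closed span of the
path operators. -/
noncomputable def leftRegAlg {G : DirectedGraph} {H : Type} [NormedAddCommGroup H]
    [InnerProductSpace ℂ H] [CompleteSpace H]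
    (Lv : G.V → H →L[ℂ] H) (Le : G.E → H →L[ℂ] H) : Set (H →L[ℂ] H) :=
  wotClosure (↑(Submodule.span ℂ
    {T : H →L[ℂ] H | ∃ q : PathIdx G, T = pathOpL Lv Le q.1.1 q.1.2}))

/-!
Every `T ∈ 𝔏_G` has the matrix of its Fourier series `∑ a_w L_w`: `⟨T ξ_p, ξ_q⟩ = a_w`
if `q = w p` and `0` if `q` does not end in `p`. These are linear conditions on matrix entries,
so they pass from path operators to their WOT-closed span. For an idempotent `Q` with vanishing
diagonal, `a_r = ⟨Q² ξ_{s(r)}, ξ_r⟩ = ∑_i ⟨Q ξ_{s(r)}, ξ_i⟩ ⟨Q ξ_i, ξ_r⟩`, and each term contains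
either a diagonal coefficient or some `a_w` with `|w| < |r|`; by induction all `a_r` vanish, so
`Q = 0`. For the finiteness statement, the diagonal coefficients are multiplicative, so `AB = P`
and `BA = Q` have the same diagonal and `P - Q` is an idempotent with zero diagonal.
-/

open scoped InnerProductSpace

namespace DirectedGraph

variable {G : DirectedGraph}

lemma isPathList_iff {μ : List G.E} : G.IsPathList μ ↔ μ.IsChain G.Composable := Iff.rfl

lemma RngIs.unique {v w w' : G.V} {μ : List G.E} (h : G.RngIs v μ w) (h' : G.RngIs v μ w') :
    w = w' := by
  cases μ <;> exact h.symm.trans h'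

lemma isPathAt_nil (v : G.V) : G.IsPathAt v [] :=
  ⟨List.isChain_nil, fun e he => by simp at he⟩

lemma IsPathAt.tail {v : G.V} {e : G.E} {l : List G.E} (h : G.IsPathAt v (e :: l)) :
    G.IsPathAt v l := by
  cases l with
  | nil => exact isPathAt_nil v
  | cons f t => exact ⟨h.1.tail, fun x hx => h.2 x (by simpa using hx)⟩

lemma isPathAt_append_iff {u v : G.V} {l m : List G.E} (hl : G.IsPathAt u l) (hl₀ : l ≠ [])
    (hm : G.IsPathAt v m) : G.IsPathAt v (l ++ m) ↔ G.RngIs v m u := by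
  have hx : G.src (l.getLast hl₀) = u := hl.2 _ (List.getLast?_eq_some_getLast hl₀)
  cases m with
  | nil =>
    rw [List.append_nil, RngIs]
    refine ⟨fun h => (h.2 _ (List.getLast?_eq_some_getLast hl₀)).symm.trans hx, ?_⟩
    rintro rfl
    exact hl
  | cons f t =>
    simp only [IsPathAt, isPathList_iff, List.isChain_append, SrcIs, RngIs, Composable,
      List.getLast?_append_of_ne_nil _ (List.cons_ne_nil f t), List.getLast?_eq_some_getLast hl₀,
      List.head?_cons, Option.mem_def, Option.some.injEq, forall_eq', hx]
    exact ⟨fun h => h.1.2.2.symm, fun h => ⟨⟨hl.1, hm.1, h.symm⟩, hm.2⟩⟩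

lemma isPathAt_cons_iff {v : G.V} {e : G.E} {m : List G.E} (hm : G.IsPathAt v m) :
    G.IsPathAt v (e :: m) ↔ G.RngIs v m (G.src e) :=
  isPathAt_append_iff (l := [e]) ⟨List.isChain_singleton e, by simp [SrcIs]⟩
    (List.cons_ne_nil _ _) hm

end DirectedGraph

open DirectedGraph

namespace PathIdx

variable {G : DirectedGraph}

def sourceVertex (p : PathIdx G) : PathIdx G := ⟨(p.1.1, []), isPathAt_nil p.1.1⟩

/-- `q = w p` in the notation of path composition: `q` is `p` followed by `w`. -/
def IsConcat (w p q : PathIdx G) : Prop :=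
  q.1.1 = p.1.1 ∧ q.1.2 = w.1.2 ++ p.1.2 ∧ G.RngIs p.1.1 p.1.2 w.1.1

lemma isPathAt_append (w p : PathIdx G) (h : G.RngIs p.1.1 p.1.2 w.1.1) :
    G.IsPathAt p.1.1 (w.1.2 ++ p.1.2) := by
  rcases eq_or_ne w.1.2 [] with hw | hw
  · simpa [hw] using p.2
  · exact (isPathAt_append_iff w.2 hw p.2).mpr h

def concat (w p : PathIdx G) (h : G.RngIs p.1.1 p.1.2 w.1.1) : PathIdx G :=
  ⟨(p.1.1, w.1.2 ++ p.1.2), isPathAt_append w p h⟩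

lemma concat_eq_iff {w p q : PathIdx G} (h : G.RngIs p.1.1 p.1.2 w.1.1) :
    w.concat p h = q ↔ IsConcat w p q :=
  ⟨by rintro rfl; exact ⟨rfl, rfl, h⟩, fun hq => Subtype.ext (Prod.ext hq.1.symm hq.2.1.symm)⟩

lemma IsConcat.left_unique {w w' p q : PathIdx G} (h : IsConcat w p q) (h' : IsConcat w' p q) :
    w = w' :=
  Subtype.ext <|
    Prod.ext (h.2.2.unique h'.2.2) (List.append_cancel_right (h.2.1.symm.trans h'.2.1))

lemma isConcat_sourceVertex_iff {w r : PathIdx G} : IsConcat w r.sourceVertex r ↔ w = r :=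
  ⟨fun h => Subtype.ext (Prod.ext h.2.2.symm (by simpa [sourceVertex] using h.2.1.symm)),
    by rintro rfl; exact ⟨rfl, by simp [sourceVertex], rfl⟩⟩

lemma IsConcat.eq_sourceVertex {w p q : PathIdx G} (h : IsConcat w p q) (hp : p.1.2 = []) :
    p = q.sourceVertex :=
  Subtype.ext (Prod.ext h.1.symm hp)

lemma IsConcat.eq_of_nil {w p q : PathIdx G} (h : IsConcat w p q) (hq : q.1.2 = []) : p = q :=
  Subtype.ext (Prod.ext h.1.symm (by rw [hq, (List.append_eq_nil_iff.mp (h.2.1.symm.trans hq)).2]))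

lemma IsConcat.length_eq {w p q : PathIdx G} (h : IsConcat w p q) :
    q.1.2.length = w.1.2.length + p.1.2.length := by
  rw [h.2.1, List.length_append]

end PathIdx

open PathIdx

lemma HilbertBasis.inner_mul_apply_eq_tsum {ι 𝕜 E : Type*} [RCLike 𝕜] [NormedAddCommGroup E]
    [InnerProductSpace 𝕜 E] [CompleteSpace E] (b : HilbertBasis ι 𝕜 E) (S T : E →L[𝕜] E)
    (x y : E) : ⟪(S * T) x, y⟫_𝕜 = ∑' i, ⟪T x, b i⟫_𝕜 * ⟪S (b i), y⟫_𝕜 := by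
  calc ⟪(S * T) x, y⟫_𝕜 = ⟪T x, ContinuousLinearMap.adjoint S y⟫_𝕜 :=
        (ContinuousLinearMap.adjoint_inner_right S (T x) y).symm
    _ = _ := by
      rw [← b.tsum_inner_mul_inner]
      simp only [ContinuousLinearMap.adjoint_inner_right]

lemma HilbertBasis.eq_zero_of_inner_apply {ι 𝕜 E : Type*} [RCLike 𝕜] [NormedAddCommGroup E]
    [InnerProductSpace 𝕜 E] (b : HilbertBasis ι 𝕜 E) {T : E →L[𝕜] E}
    (h : ∀ i j, ⟪T (b i), b j⟫_𝕜 = 0) : T = 0 := by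
  have hcol : ∀ i, T (b i) = 0 := fun i =>
    inner_self_eq_zero.mp (by rw [← b.tsum_inner_mul_inner]; simp [h])
  refine ContinuousLinearMap.ext_on
    (Submodule.dense_iff_topologicalClosure_eq_top.mpr b.dense_span) ?_
  rintro _ ⟨i, rfl⟩
  simp [hcol]

section LeftConvolution

variable {G : DirectedGraph} {H : Type} [NormedAddCommGroup H] [InnerProductSpace ℂ H]

noncomputable def pathFourierCoeff (ξ : PathIdx G → H) (T : H →L[ℂ] H) (r : PathIdx G) : ℂ :=
  ⟪T (ξ r.sourceVertex), ξ r⟫_ℂ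

/-- The matrix of `T` in `ξ` is that of the Fourier series `∑ a_w L_w`, where
`a = pathFourierCoeff ξ T`. -/
structure IsLeftConvolution (ξ : PathIdx G → H) (T : H →L[ℂ] H) : Prop where
  inner_eq_zero : ∀ p q, (¬ ∃ w, IsConcat w p q) → ⟪T (ξ p), ξ q⟫_ℂ = 0
  inner_eq_pathFourierCoeff :
    ∀ {w p q}, IsConcat w p q → ⟪T (ξ p), ξ q⟫_ℂ = pathFourierCoeff ξ T w

namespace IsLeftConvolution

variable {ξ : PathIdx G → H} {S T Q : H →L[ℂ] H}

lemma sub (hS : IsLeftConvolution ξ S) (hT : IsLeftConvolution ξ T) :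
    IsLeftConvolution ξ (S - T) where
  inner_eq_zero p q h := by
    rw [sub_apply, inner_sub_left, hS.inner_eq_zero p q h,
      hT.inner_eq_zero p q h, sub_zero]
  inner_eq_pathFourierCoeff h := by
    rw [sub_apply, inner_sub_left, hS.inner_eq_pathFourierCoeff h,
      hT.inner_eq_pathFourierCoeff h, pathFourierCoeff, pathFourierCoeff, pathFourierCoeff,
      sub_apply, inner_sub_left]

variable (b : HilbertBasis (PathIdx G) ℂ H)

lemma eq_zero_of_pathFourierCoeff_eq_zero (hT : IsLeftConvolution b T)
    (h : ∀ r, pathFourierCoeff b T r = 0) : T = 0 := by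
  refine b.eq_zero_of_inner_apply fun p q => ?_
  by_cases hpq : ∃ w, IsConcat w p q
  · obtain ⟨w, hw⟩ := hpq
    rw [hT.inner_eq_pathFourierCoeff hw, h]
  · exact hT.inner_eq_zero p q hpq

variable [CompleteSpace H]

lemma inner_mul_apply_self (hS : IsLeftConvolution b S) (T : H →L[ℂ] H) {p : PathIdx G}
    (hp : p.1.2 = []) : ⟪(S * T) (b p), b p⟫_ℂ = ⟪T (b p), b p⟫_ℂ * ⟪S (b p), b p⟫_ℂ := by
  rw [b.inner_mul_apply_eq_tsum, tsum_eq_single p]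
  intro i hi
  rw [hS.inner_eq_zero i p fun ⟨w, hw⟩ => hi (hw.eq_of_nil hp), mul_zero]

lemma pathFourierCoeff_eq_zero_of_idempotent (hQ : IsLeftConvolution b Q) (hidem : Q * Q = Q)
    (hdiag : ∀ p : PathIdx G, p.1.2 = [] → ⟪Q (b p), b p⟫_ℂ = 0) (r : PathIdx G) :
    pathFourierCoeff b Q r = 0 := by
  have hterm : ∀ i, ⟪Q (b r.sourceVertex), b i⟫_ℂ * ⟪Q (b i), b r⟫_ℂ = 0 := by
    intro i
    by_cases hi : ∃ w, IsConcat w i r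
    swap
    · rw [hQ.inner_eq_zero i r hi, mul_zero]
    obtain ⟨w, hw⟩ := hi
    rcases eq_or_ne i.1.2 [] with hi₀ | hi₀
    · rw [hw.eq_sourceVertex hi₀, hdiag _ rfl, zero_mul]
    · have : w.1.2.length < r.1.2.length := by
        have := List.length_pos_of_ne_nil hi₀
        rw [hw.length_eq]
        omega
      rw [hQ.inner_eq_pathFourierCoeff hw,
        pathFourierCoeff_eq_zero_of_idempotent hQ hidem hdiag w, mul_zero]
  rw [pathFourierCoeff, ← hidem, b.inner_mul_apply_eq_tsum, tsum_congr hterm, tsum_zero]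
termination_by r.1.2.length

lemma eq_zero_of_idempotent (hQ : IsLeftConvolution b Q) (hidem : Q * Q = Q)
    (hdiag : ∀ p : PathIdx G, p.1.2 = [] → ⟪Q (b p), b p⟫_ℂ = 0) : Q = 0 :=
  hQ.eq_zero_of_pathFourierCoeff_eq_zero b <|
    hQ.pathFourierCoeff_eq_zero_of_idempotent b hidem hdiag

end IsLeftConvolution

end LeftConvolution

section Wot

variable {H : Type} [NormedAddCommGroup H] [InnerProductSpace ℂ H]

lemma inner_eq_of_mem_wotClosure {A : Set (H →L[ℂ] H)} {T : H →L[ℂ] H} {a b c d : H}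
    (h : ∀ X ∈ A, ⟪X a, b⟫_ℂ = ⟪X c, d⟫_ℂ) (hT : T ∈ wotClosure A) :
    ⟪T a, b⟫_ℂ = ⟪T c, d⟫_ℂ := by
  classical
  refine sub_eq_zero.mp (norm_le_zero_iff.mp (le_of_forall_pos_lt_add fun ε hε => ?_))
  obtain ⟨X, hX, hclose⟩ := hT {(a, b), (c, d)} (ε / 2) (half_pos hε)
  calc ‖⟪T a, b⟫_ℂ - ⟪T c, d⟫_ℂ‖ = ‖⟪(T - X) a, b⟫_ℂ - ⟪(T - X) c, d⟫_ℂ‖ := by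
        rw [sub_apply, sub_apply, inner_sub_left, inner_sub_left, h X hX,
          sub_sub_sub_cancel_right]
    _ ≤ ‖⟪(T - X) a, b⟫_ℂ‖ + ‖⟪(T - X) c, d⟫_ℂ‖ := norm_sub_le _ _
    _ < ε / 2 + ε / 2 := add_lt_add (hclose (a, b) (by simp)) (hclose (c, d) (by simp))
    _ = 0 + ε := by ring

lemma inner_eq_of_mem_span {S : Set (H →L[ℂ] H)} {T : H →L[ℂ] H} {a b c d : H}
    (h : ∀ X ∈ S, ⟪X a, b⟫_ℂ = ⟪X c, d⟫_ℂ) (hT : T ∈ Submodule.span ℂ S) :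
    ⟪T a, b⟫_ℂ = ⟪T c, d⟫_ℂ := by
  induction hT using Submodule.span_induction with
  | mem X hX => exact h X hX
  | zero => simp
  | add X Y _ _ hX hY => simp only [add_apply, inner_add_left, hX, hY]
  | smul r X _ hX => simp only [smul_apply, inner_smul_left, hX]

lemma inner_eq_of_mem_leftRegAlg [CompleteSpace H] {G : DirectedGraph} {Lv : G.V → H →L[ℂ] H}
    {Le : G.E → H →L[ℂ] H} {T : H →L[ℂ] H} (hT : T ∈ leftRegAlg Lv Le) {a b c d : H}
    (h : ∀ w : PathIdx G,
      ⟪pathOpL Lv Le w.1.1 w.1.2 a, b⟫_ℂ = ⟪pathOpL Lv Le w.1.1 w.1.2 c, d⟫_ℂ) :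
    ⟪T a, b⟫_ℂ = ⟪T c, d⟫_ℂ := by
  refine inner_eq_of_mem_wotClosure (fun X hX => inner_eq_of_mem_span ?_ hX) hT
  rintro _ ⟨w, rfl⟩
  exact h w

end Wot

/-- `(Lv, Le)` acts on the family `ξ` as the left regular family acts on `ℓ²(F⁺_G)`. -/
structure IsLeftRegularFamily {G : DirectedGraph} {H : Type} [NormedAddCommGroup H]
    [InnerProductSpace ℂ H] (ξ : PathIdx G → H) (Lv : G.V → H →L[ℂ] H)
    (Le : G.E → H →L[ℂ] H) : Prop where
  vertex_eq : ∀ (v : G.V) (p : PathIdx G), G.RngIs p.1.1 p.1.2 v → Lv v (ξ p) = ξ p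
  vertex_ne : ∀ (v : G.V) (p : PathIdx G), ¬ G.RngIs p.1.1 p.1.2 v → Lv v (ξ p) = 0
  edge_eq : ∀ (e : G.E) (p q : PathIdx G), G.RngIs p.1.1 p.1.2 (G.src e) →
    q.1.1 = p.1.1 → q.1.2 = e :: p.1.2 → Le e (ξ p) = ξ q
  edge_ne : ∀ (e : G.E) (p : PathIdx G), ¬ G.RngIs p.1.1 p.1.2 (G.src e) → Le e (ξ p) = 0

namespace IsLeftRegularFamily

variable {G : DirectedGraph} {H : Type} [NormedAddCommGroup H] [InnerProductSpace ℂ H]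
  {ξ : PathIdx G → H} {Lv : G.V → H →L[ℂ] H} {Le : G.E → H →L[ℂ] H}

open Classical

lemma edge_apply (hL : IsLeftRegularFamily ξ Lv Le) (e : G.E) (p : PathIdx G) :
    Le e (ξ p) =
      if h : G.IsPathAt p.1.1 (e :: p.1.2) then ξ ⟨(p.1.1, e :: p.1.2), h⟩ else 0 := by
  by_cases h : G.IsPathAt p.1.1 (e :: p.1.2)
  · rw [dif_pos h]
    exact hL.edge_eq e p _ ((isPathAt_cons_iff p.2).mp h) rfl rfl
  · rw [dif_neg h]
    exact hL.edge_ne e p (mt (isPathAt_cons_iff p.2).mpr h)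

lemma listProd_apply (hL : IsLeftRegularFamily ξ Lv Le) (l : List G.E) (p : PathIdx G) :
    (l.map Le).prod (ξ p) =
      if h : G.IsPathAt p.1.1 (l ++ p.1.2) then ξ ⟨(p.1.1, l ++ p.1.2), h⟩ else 0 := by
  induction l with
  | nil =>
    rw [List.nil_append, dif_pos p.2]
    rfl
  | cons e l ih =>
    change Le e ((l.map Le).prod (ξ p)) = _
    rw [ih]
    by_cases h : G.IsPathAt p.1.1 (l ++ p.1.2)
    · rw [dif_pos h, hL.edge_apply e ⟨_, h⟩]
      rfl
    · rw [dif_neg h, map_zero, dif_neg fun h' => h h'.tail]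

variable [CompleteSpace H]

lemma pathOpL_apply (hL : IsLeftRegularFamily ξ Lv Le) (w p : PathIdx G) :
    pathOpL Lv Le w.1.1 w.1.2 (ξ p) =
      if h : G.RngIs p.1.1 p.1.2 w.1.1 then ξ (w.concat p h) else 0 := by
  obtain ⟨⟨v, _ | ⟨e, t⟩⟩, hw⟩ := w
  · by_cases h : G.RngIs p.1.1 p.1.2 v
    · rw [dif_pos h]
      exact hL.vertex_eq v p h
    · rw [dif_neg h]
      exact hL.vertex_ne v p h
  · have hiff := isPathAt_append_iff hw (List.cons_ne_nil e t) p.2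
    rw [pathOpL, hL.listProd_apply]
    by_cases h : G.RngIs p.1.1 p.1.2 v
    · rw [dif_pos (hiff.mpr h), dif_pos h]
      rfl
    · rw [dif_neg (mt hiff.mp h), dif_neg h]

lemma inner_pathOpL (hL : IsLeftRegularFamily ξ Lv Le) (hON : Orthonormal ℂ ξ)
    (w p q : PathIdx G) :
    ⟪pathOpL Lv Le w.1.1 w.1.2 (ξ p), ξ q⟫_ℂ = if IsConcat w p q then 1 else 0 := by
  rw [hL.pathOpL_apply]
  by_cases h : G.RngIs p.1.1 p.1.2 w.1.1
  · rw [dif_pos h, orthonormal_iff_ite.mp hON]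
    exact if_congr (concat_eq_iff h) rfl rfl
  · rw [dif_neg h, inner_zero_left, if_neg fun hc => h hc.2.2]

lemma isLeftConvolution (hL : IsLeftRegularFamily ξ Lv Le) (hON : Orthonormal ℂ ξ)
    {T : H →L[ℂ] H} (hT : T ∈ leftRegAlg Lv Le) : IsLeftConvolution ξ T where
  inner_eq_zero p q hpq := by
    simpa using inner_eq_of_mem_leftRegAlg hT (c := 0) (d := 0) fun w => by
      rw [hL.inner_pathOpL hON, if_neg fun h => hpq ⟨w, h⟩, map_zero, inner_zero_left]
  inner_eq_pathFourierCoeff {w p q} h := inner_eq_of_mem_leftRegAlg hT fun u => by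
    rw [hL.inner_pathOpL hON, hL.inner_pathOpL hON, isConcat_sourceVertex_iff]
    exact if_congr ⟨fun hu => hu.left_unique h, fun hu => hu ▸ h⟩ rfl rfl

end IsLeftRegularFamily

/-- Realize `𝔏_G` on a Hilbert space with orthonormal basis
`{ξ_μ}` indexed by the paths of `G`, where `L_v ξ_μ = ξ_μ` if `r(μ) = v` (else `0`)
and `L_e ξ_μ = ξ_{eμ}` if `r(μ) = s(e)` (else `0`).  If `Q ∈ 𝔏_G` is an idempotent
whose diagonal vertex Fourier coefficients `⟨Q ξ_v, ξ_v⟩` all vanish, then `Q = 0`.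
Consequently every nonzero idempotent `P ∈ 𝔏_G` is finite: if `Q ∈ 𝔏_G` is an
idempotent with `PQ = QP = Q` which is algebraically equivalent to `P`
(`AB = P`, `BA = Q` with `A, B ∈ 𝔏_G`), then `Q = P`. -/
theorem stmt10 (G : DirectedGraph) {H : Type} [NormedAddCommGroup H]
    [InnerProductSpace ℂ H] [CompleteSpace H]
    (ξ : PathIdx G → H) (hON : Orthonormal ℂ ξ)
    (htot : (Submodule.span ℂ (Set.range ξ)).topologicalClosure = ⊤)
    (Lv : G.V → H →L[ℂ] H) (Le : G.E → H →L[ℂ] H)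
    (hLv_eq : ∀ (v : G.V) (p : PathIdx G), G.RngIs p.1.1 p.1.2 v → Lv v (ξ p) = ξ p)
    (hLv_ne : ∀ (v : G.V) (p : PathIdx G), ¬ G.RngIs p.1.1 p.1.2 v → Lv v (ξ p) = 0)
    (hLe_eq : ∀ (e : G.E) (p q : PathIdx G), G.RngIs p.1.1 p.1.2 (G.src e) →
      q.1.1 = p.1.1 → q.1.2 = e :: p.1.2 → Le e (ξ p) = ξ q)
    (hLe_ne : ∀ (e : G.E) (p : PathIdx G), ¬ G.RngIs p.1.1 p.1.2 (G.src e) →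
      Le e (ξ p) = 0) :
    (∀ Q ∈ leftRegAlg Lv Le, Q * Q = Q →
      (∀ p : PathIdx G, p.1.2 = [] → (@inner ℂ H _ (Q (ξ p)) (ξ p)) = 0) → Q = 0) ∧
    (∀ P Q A B : H →L[ℂ] H, P ∈ leftRegAlg Lv Le → Q ∈ leftRegAlg Lv Le →
      A ∈ leftRegAlg Lv Le → B ∈ leftRegAlg Lv Le →
      P ≠ 0 → P * P = P → Q * Q = Q → P * Q = Q → Q * P = Q →
      A * B = P → B * A = Q → Q = P) := by
  obtain ⟨b, rfl⟩ : ∃ b : HilbertBasis (PathIdx G) ℂ H, ⇑b = ξ :=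
    ⟨_, HilbertBasis.coe_mk hON htot.ge⟩
  have hL : IsLeftRegularFamily b Lv Le := ⟨hLv_eq, hLv_ne, hLe_eq, hLe_ne⟩
  have conv : ∀ T ∈ leftRegAlg Lv Le, IsLeftConvolution b T := fun T hT =>
    hL.isLeftConvolution hON hT
  refine ⟨fun Q hQ => (conv Q hQ).eq_zero_of_idempotent b, ?_⟩
  intro P Q A B hP hQ hA hB _ hPP hQQ hPQ hQP hAB hBA
  have hidem : (P - Q) * (P - Q) = P - Q := by
    rw [sub_mul, mul_sub, mul_sub, hPP, hQQ, hPQ, hQP, sub_self, sub_zero]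
  have hdiag : ∀ p : PathIdx G, p.1.2 = [] → ⟪(P - Q) (b p), b p⟫_ℂ = 0 := by
    intro p hp
    rw [sub_apply, inner_sub_left, ← hAB, ← hBA, (conv A hA).inner_mul_apply_self b B hp,
      (conv B hB).inner_mul_apply_self b A hp, mul_comm, sub_self]
  exact (sub_eq_zero.mp (((conv P hP).sub (conv Q hQ)).eq_zero_of_idempotent b hidem hdiag)).symm
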